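/- arXiv:1612.02317 — 5 statements merged into one kernel-verified Lean document; each statement's English description precedes it below -/
import Mathlib

section
/- (Lemma 1(ii)) Suppose v is a subgradient of h at z and Bz + b + Cy + v = 0 (i.e., z is a triangle-proximal point of y). Then for every x ∈ ℝⁿ, f(z) − f(x) ≤ ⟨x − z, C(y − z)⟩ − (1/2)⟨x − z, A(x − z)⟩. -/
/-! Since `A = B + C`, the optimality condition reads `Az + b + C(y - z) + v = 0`. A quadratic equals
its second-order Taylor expansion at `z`: `q(x) = q(z) + ⟨Az + b, x - z⟩ + ½⟨x - z, A(x - z)⟩`, and the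
subgradient inequality gives `h(z) - h(x) ≤ -⟨v, x - z⟩`; adding the two and substituting `v`
yields the bound. -/

open scoped RealInnerProductSpace
open Matrix Filter

noncomputable section

/-- Euclidean space ℝⁿ. -/
abbrev E (n : ℕ) := EuclideanSpace ℝ (Fin n)

/-- Matrix-vector multiplication, valued in Euclidean space. -/
def mulVecE {n : ℕ} (M : Matrix (Fin n) (Fin n) ℝ) (x : E n) : E n :=
  (WithLp.equiv 2 (Fin n → ℝ)).symm (M.mulVec ((WithLp.equiv 2 (Fin n → ℝ)) x))

/-- Operator (spectral) norm of a matrix. -/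
def opNorm {n : ℕ} (M : Matrix (Fin n) (Fin n) ℝ) : ℝ :=
  ‖Matrix.toEuclideanCLM (𝕜 := ℝ) M‖

/-- The diagonal part `D` of `A`. -/
def Dmat {n : ℕ} (A : Matrix (Fin n) (Fin n) ℝ) : Matrix (Fin n) (Fin n) ℝ :=
  Matrix.diagonal fun i => A i i

/-- The strictly lower triangular part `L` of `A`. -/
def Lmat {n : ℕ} (A : Matrix (Fin n) (Fin n) ℝ) : Matrix (Fin n) (Fin n) ℝ :=
  Matrix.of fun i j => if (j : ℕ) < (i : ℕ) then A i j else 0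

/-- `B = L + (1/ω)(D + θI)`. -/
def Bmat {n : ℕ} (ω θ : ℝ) (A : Matrix (Fin n) (Fin n) ℝ) : Matrix (Fin n) (Fin n) ℝ :=
  Lmat A + ω⁻¹ • (Dmat A + θ • (1 : Matrix (Fin n) (Fin n) ℝ))

/-- `C = Lᵀ + (1/ω)((ω−1)D − θI)`. -/
def Cmat {n : ℕ} (ω θ : ℝ) (A : Matrix (Fin n) (Fin n) ℝ) : Matrix (Fin n) (Fin n) ℝ :=
  (Lmat A)ᵀ + ω⁻¹ • ((ω - 1) • Dmat A - θ • (1 : Matrix (Fin n) (Fin n) ℝ))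

/-- `v` is a subgradient of `h` at `z`. -/
def IsSubgradient {n : ℕ} (h : E n → ℝ) (v z : E n) : Prop :=
  ∀ y, h z + ⟪v, y - z⟫ ≤ h y

/-- The composite objective `f(x) = (1/2)⟨x, Ax⟩ + ⟨b, x⟩ + h(x)`. -/
def fObj {n : ℕ} (A : Matrix (Fin n) (Fin n) ℝ) (b : E n) (h : E n → ℝ) (x : E n) : ℝ :=
  (1/2) * ⟪x, mulVecE A x⟫ + ⟪b, x⟫ + h x

/-- `z` is a triangle-proximal point of `x`: there is a subgradient `v` of `h` at `z`
with `Bz + b + Cx + v = 0`. -/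
def IsTriangleProx {n : ℕ} (ω θ : ℝ) (A : Matrix (Fin n) (Fin n) ℝ) (b : E n)
    (h : E n → ℝ) (x z : E n) : Prop :=
  ∃ v, IsSubgradient h v z ∧
    mulVecE (Bmat ω θ A) z + b + mulVecE (Cmat ω θ A) x + v = 0

theorem LinearMap.IsSymmetric.inner_map_add_sub {F : Type*} [NormedAddCommGroup F]
    [InnerProductSpace ℝ F] {T : F →ₗ[ℝ] F} (hT : T.IsSymmetric) (x z : F) :
    ⟪x, T x⟫ = ⟪z, T z⟫ + 2 * ⟪T z, x - z⟫ + ⟪x - z, T (x - z)⟫ := by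
  have hzx : ⟪z, T x⟫ = ⟪T z, x⟫ := (hT z x).symm
  have hzz : ⟪z, T z⟫ = ⟪T z, z⟫ := real_inner_comm _ _
  have hxz : ⟪x, T z⟫ = ⟪T z, x⟫ := real_inner_comm _ _
  simp only [map_sub, inner_sub_left, inner_sub_right]
  linarith

section Splitting

variable {n : ℕ} {A : Matrix (Fin n) (Fin n) ℝ}

theorem Lmat_add_Dmat_add_transpose_Lmat (hA : A.IsSymm) :
    Lmat A + Dmat A + (Lmat A)ᵀ = A := by
  ext i j
  simp only [Lmat, Dmat, Matrix.add_apply, Matrix.transpose_apply, Matrix.diagonal_apply,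
    Matrix.of_apply]
  rcases lt_trichotomy (i : ℕ) j with hij | hij | hij
  · simp [hij, hij.not_gt, Fin.ne_of_lt hij, hA.apply i j]
  · obtain rfl := Fin.ext hij
    simp
  · simp [hij, hij.not_gt, Fin.ne_of_gt hij]

theorem Bmat_add_Cmat {ω : ℝ} (hω : ω ≠ 0) (θ : ℝ) (hA : A.IsSymm) :
    Bmat ω θ A + Cmat ω θ A = A := by
  conv_rhs => rw [← Lmat_add_Dmat_add_transpose_Lmat hA]
  simp only [Bmat, Cmat]
  match_scalars <;> field_simp <;> ring

end Splitting

theorem objective_sub_le_of_splitting_prox {F : Type*} [NormedAddCommGroup F]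
    [InnerProductSpace ℝ F] {T B C : F →ₗ[ℝ] F} (hT : T.IsSymmetric) (hBC : B + C = T)
    {h : F → ℝ} {b y z v : F} (hv : ∀ x, h z + ⟪v, x - z⟫ ≤ h x)
    (heq : B z + b + C y + v = 0) (x : F) :
    (1 / 2 * ⟪z, T z⟫ + ⟪b, z⟫ + h z) - (1 / 2 * ⟪x, T x⟫ + ⟪b, x⟫ + h x)
      ≤ ⟪x - z, C (y - z)⟫ - 1 / 2 * ⟪x - z, T (x - z)⟫ := by
  have hsplit : B z + b + C y = T z + b + C (y - z) := by
    rw [← hBC, LinearMap.add_apply, map_sub]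
    abel
  have hsub := hv x
  rw [eq_neg_of_add_eq_zero_right heq, hsplit, inner_neg_left, inner_add_left, inner_add_left,
    inner_sub_right b, real_inner_comm _ (C (y - z))] at hsub
  linarith [hT.inner_map_add_sub x z]

theorem triangle_prox_descent_inequality_general {n : ℕ}
    (A : Matrix (Fin n) (Fin n) ℝ) (hA : A.IsSymm) (b : E n) (h : E n → ℝ)
    (ω θ : ℝ) (hω : ω ∈ Set.Ioo (0 : ℝ) 2)
    (y z v : E n) (hv : IsSubgradient h v z)
    (heq : mulVecE (Bmat ω θ A) z + b + mulVecE (Cmat ω θ A) y + v = 0) :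
    ∀ x : E n,
      fObj A b h z - fObj A b h x
        ≤ ⟪x - z, mulVecE (Cmat ω θ A) (y - z)⟫
          - (1 / 2) * ⟪x - z, mulVecE A (x - z)⟫ := by
  have hT : (toEuclideanLin A).IsSymmetric :=
    isSymmetric_toEuclideanLin_iff.mpr ((conjTranspose_eq_transpose_of_trivial A).trans hA)
  have hBC : toEuclideanLin (Bmat ω θ A) + toEuclideanLin (Cmat ω θ A) = toEuclideanLin A := by
    rw [← map_add, Bmat_add_Cmat hω.1.ne' θ hA]
  -- `mulVecE M` is definitionally `toEuclideanLin M`.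
  exact objective_sub_le_of_splitting_prox hT hBC hv heq

/-- Lemma 1(ii). -/
theorem triangle_prox_descent_inequality {n : ℕ} (hn : 0 < n)
    (A : Matrix (Fin n) (Fin n) ℝ) (hA : A.IsSymm) (b : E n) (h : E n → ℝ)
    (ω θ : ℝ) (hω : ω ∈ Set.Ioo (0 : ℝ) 2) (hθ : 0 ≤ θ)
    (y z v : E n) (hv : IsSubgradient h v z)
    (heq : mulVecE (Bmat ω θ A) z + b + mulVecE (Cmat ω θ A) y + v = 0) :
    ∀ x : E n,
      fObj A b h z - fObj A b h x
        ≤ ⟪x - z, mulVecE (Cmat ω θ A) (y - z)⟫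
          - (1 / 2) * ⟪x - z, mulVecE A (x - z)⟫ :=
  triangle_prox_descent_inequality_general A hA b h ω θ hω y z v hv heq
end
end

section
/- (Lemma 3) Let C > 0 and let (uᵏ)ₖ≥0 be a sequence of nonnegative real numbers satisfying uᵏ⁺¹ ≤ −2C + 2C·√(1 + uᵏ/C) for all k ≥ 0. Then for every k ≥ 1, uᵏ ≤ C₂/k, where C₂ = max(8C, 2√(C·u⁰)). -/
open scoped RealInnerProductSpace
open Matrix Filter

noncomputable section

/-!
Squaring the recursion gives `u (k+1) ^ 2 + 4 C u (k+1) ≤ 4 C u k`. Dropping `4 C u 1 ≥ 0`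
yields `u 1 ≤ 2 √(C u 0)`, and since `x ↦ x ^ 2 + 4 C x` is increasing on `[0, ∞)`, the
bound `u k ≤ M / k` propagates to `k + 1` as soon as `(M/(k+1)) ^ 2 + 4 C M/(k+1) ≥ 4 C M/k`,
which is `M k ≥ 4 C (k+1)` and holds for `M ≥ 8 C`.
-/

theorem sq_add_four_mul_le_of_le_neg_add_sqrt {C x y : ℝ} (hC : 0 < C) (hy : 0 ≤ y)
    (h : y ≤ -2 * C + 2 * C * Real.sqrt (1 + x / C)) :
    y ^ 2 + 4 * C * y ≤ 4 * C * x := by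
  have hsqrt : 2 * C * Real.sqrt (1 + x / C) = Real.sqrt (4 * C ^ 2 + 4 * C * x) := by
    rw [← Real.sqrt_sq (by positivity : 0 ≤ 2 * C), ← Real.sqrt_mul (by positivity)]
    congr 1
    field_simp
    ring
  have hle : y + 2 * C ≤ Real.sqrt (4 * C ^ 2 + 4 * C * x) := by linarith
  have := (Real.le_sqrt' (by linarith)).mp hle
  nlinarith

theorem le_two_mul_sqrt_of_sq_add_four_mul_le {C x y : ℝ} (hC : 0 ≤ C) (hy : 0 ≤ y)
    (h : y ^ 2 + 4 * C * y ≤ 4 * C * x) : y ≤ 2 * Real.sqrt (C * x) := by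
  have : y / 2 ≤ Real.sqrt (C * x) := Real.le_sqrt_of_sq_le (by nlinarith)
  linarith

theorem four_mul_div_le_sq_add_four_mul_div_add_one {C M n : ℝ} (hC : 0 ≤ C) (hM : 8 * C ≤ M)
    (hn : 1 ≤ n) :
    4 * C * (M / n) ≤ (M / (n + 1)) ^ 2 + 4 * C * (M / (n + 1)) := by
  have hn0 : 0 < n := by linarith
  rw [div_pow, mul_div_assoc', mul_div_assoc', div_add_div _ _ (by positivity) (by positivity),
    div_le_div_iff₀ hn0 (by positivity)]
  nlinarith [mul_nonneg hC (sub_nonneg.mpr hn), mul_nonneg (sub_nonneg.mpr hM) hn0.le]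

theorem le_div_add_one_of_sq_add_four_mul_le {C M n x y : ℝ} (hC : 0 ≤ C) (hM : 8 * C ≤ M)
    (hn : 1 ≤ n) (hx : x ≤ M / n) (h : y ^ 2 + 4 * C * y ≤ 4 * C * x) :
    y ≤ M / (n + 1) := by
  by_contra! hlt
  have hm : 0 ≤ M / (n + 1) := div_nonneg (by linarith) (by linarith)
  have hmono : (M / (n + 1)) ^ 2 + 4 * C * (M / (n + 1)) < y ^ 2 + 4 * C * y := by
    nlinarith
  have := four_mul_div_le_sq_add_four_mul_div_add_one hC hM hn
  nlinarith

/-- Lemma 3. -/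
theorem recursive_sequence_sublinear_bound (C : ℝ) (hC : 0 < C)
    (u : ℕ → ℝ) (hu : ∀ k, 0 ≤ u k)
    (hrec : ∀ k : ℕ, u (k + 1) ≤ -2 * C + 2 * C * Real.sqrt (1 + u k / C)) :
    ∀ k : ℕ, 1 ≤ k → u k ≤ max (8 * C) (2 * Real.sqrt (C * u 0)) / k := by
  have hstep k : u (k + 1) ^ 2 + 4 * C * u (k + 1) ≤ 4 * C * u k :=
    sq_add_four_mul_le_of_le_neg_add_sqrt hC (hu (k + 1)) (hrec k)
  intro k hk
  induction k, hk using Nat.le_induction with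
  | base =>
    rw [Nat.cast_one, div_one]
    exact (le_two_mul_sqrt_of_sq_add_four_mul_le hC.le (hu 1) (hstep 0)).trans (le_max_right _ _)
  | succ n hn ih =>
    push_cast
    exact le_div_add_one_of_sq_add_four_mul_le hC.le (le_max_left _ _) (by exact_mod_cast hn) ih
      (hstep n)
end
end

section
/- (Theorem 3, case (i): linear-rate regime) Let C₃ ≥ 0 and C₄ > 0, and let (uᵏ)ₖ≥0 be a sequence of nonnegative real numbers such that for every k: uᵏ − uᵏ⁺¹ ≥ 0, uᵏ⁺¹ ≤ C₃·√(uᵏ − uᵏ⁺¹) + C₄·(uᵏ − uᵏ⁺¹), and √(uᵏ − uᵏ⁺¹) ≥ C₃/C₄. Then for every k ≥ 0, uᵏ ≤ (2C₄/(2C₄ + 1))ᵏ · u⁰. -/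
open scoped RealInnerProductSpace
open Matrix Filter

noncomputable section

/-- Theorem 3, case (i): linear-rate regime. -/
theorem msm_linear_rate_regime (C₃ C₄ : ℝ) (hC₃ : 0 ≤ C₃) (hC₄ : 0 < C₄)
    (u : ℕ → ℝ) (hu : ∀ k, 0 ≤ u k)
    (hmono : ∀ k : ℕ, 0 ≤ u k - u (k + 1))
    (hrec : ∀ k : ℕ, u (k + 1) ≤ C₃ * Real.sqrt (u k - u (k + 1))
        + C₄ * (u k - u (k + 1)))
    (hbig : ∀ k : ℕ, C₃ / C₄ ≤ Real.sqrt (u k - u (k + 1))) :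
    ∀ k : ℕ, u k ≤ (2 * C₄ / (2 * C₄ + 1)) ^ k * u 0 := by
  have key : ∀ k, u (k+1) ≤ 2 * C₄ / (2 * C₄ + 1) * u k := by
    intro k
    have hr := hrec k
    set d := u k - u (k+1) with hd
    have hs : Real.sqrt d * Real.sqrt d = d := Real.mul_self_sqrt (hmono k)
    have h1 : C₃ * Real.sqrt d ≤ C₄ * d := by
      have := hbig k
      have h2 : C₃ ≤ C₄ * Real.sqrt d := by
        rw [div_le_iff₀ hC₄] at this; linarith [this]
      calc C₃ * Real.sqrt d ≤ C₄ * Real.sqrt d * Real.sqrt d :=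
            mul_le_mul_of_nonneg_right h2 (Real.sqrt_nonneg d)
        _ = C₄ * d := by rw [mul_assoc, hs]
    have h3 : u (k+1) ≤ 2 * C₄ * d := by linarith [hr]
    have h4 : (2 * C₄ + 1) * u (k+1) ≤ 2 * C₄ * u k := by
      have : u (k+1) ≤ 2 * C₄ * (u k - u (k+1)) := h3
      nlinarith
    rw [div_mul_eq_mul_div, le_div_iff₀ (by linarith)]
    linarith
  intro k
  induction k with
  | zero => simp
  | succ n ih =>
    calc u (n+1) ≤ 2 * C₄ / (2 * C₄ + 1) * u n := key n
      _ ≤ 2 * C₄ / (2 * C₄ + 1) * ((2 * C₄ / (2 * C₄ + 1)) ^ n * u 0) := by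
          apply mul_le_mul_of_nonneg_left ih (by positivity)
      _ = (2 * C₄ / (2 * C₄ + 1)) ^ (n+1) * u 0 := by ring
end
end

section
/- (Theorem 3, case (ii): sublinear-rate regime) Let C₃ > 0 and C₄ > 0, and let (uᵏ)ₖ≥0 be a sequence of nonnegative real numbers such that for every k: uᵏ − uᵏ⁺¹ ≥ 0, uᵏ⁺¹ ≤ C₃·√(uᵏ − uᵏ⁺¹) + C₄·(uᵏ − uᵏ⁺¹), and √(uᵏ − uᵏ⁺¹) ≤ C₃/C₄. Then for every k ≥ 1, uᵏ ≤ C₅/k, where C₅ = max(8C₃², 2C₃·√(u⁰)). -/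
open scoped RealInnerProductSpace
open Matrix Filter

noncomputable section

set_option maxHeartbeats 1000000 in
/-- Theorem 3, case (ii): sublinear-rate regime. -/
theorem msm_sublinear_rate_regime (C₃ C₄ : ℝ) (hC₃ : 0 < C₃) (hC₄ : 0 < C₄)
    (u : ℕ → ℝ) (hu : ∀ k, 0 ≤ u k)
    (hmono : ∀ k : ℕ, 0 ≤ u k - u (k + 1))
    (hrec : ∀ k : ℕ, u (k + 1) ≤ C₃ * Real.sqrt (u k - u (k + 1))
        + C₄ * (u k - u (k + 1)))
    (hsmall : ∀ k : ℕ, Real.sqrt (u k - u (k + 1)) ≤ C₃ / C₄) :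
    ∀ k : ℕ, 1 ≤ k →
      u k ≤ max (8 * C₃ ^ 2) (2 * C₃ * Real.sqrt (u 0)) / k := by

  set C₅ := max (8 * C₃ ^ 2) (2 * C₃ * Real.sqrt (u 0)) with hC₅def
  have hC₅pos : 0 < C₅ := lt_of_lt_of_le (by positivity) (le_max_left _ _)
  have h8 : 8 * C₃ ^ 2 ≤ C₅ := le_max_left _ _
  have hmax : 2 * C₃ * Real.sqrt (u 0) ≤ C₅ := le_max_right _ _
  clear_value C₅
  have key : ∀ k, (u (k + 1)) ^ 2 ≤ 4 * C₃ ^ 2 * (u k - u (k + 1)) := by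
    intro k
    have hd := hmono k
    have hs : Real.sqrt (u k - u (k + 1)) * Real.sqrt (u k - u (k + 1)) = u k - u (k + 1) :=
      Real.mul_self_sqrt hd
    have h1 : u (k + 1) ≤ 2 * C₃ * Real.sqrt (u k - u (k + 1)) := by
      have h2 : C₄ * (u k - u (k + 1)) ≤ C₃ * Real.sqrt (u k - u (k + 1)) := by
        have hsm := hsmall k
        have hle : C₄ * Real.sqrt (u k - u (k + 1)) ≤ C₃ := by
          have := (le_div_iff₀ hC₄).mp hsm; linarith
        nlinarith [Real.sqrt_nonneg (u k - u (k + 1))]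
      linarith [hrec k]
    nlinarith [hu (k + 1), Real.sqrt_nonneg (u k - u (k + 1))]
  intro k hk
  induction k with
  | zero => omega
  | succ n ih =>
    rcases Nat.eq_zero_or_pos n with hn | hn
    · subst hn
      have h1 : (u 1) ^ 2 ≤ 4 * C₃ ^ 2 * u 0 := by nlinarith [key 0, hu 1]
      have h2 : u 1 ≤ 2 * C₃ * Real.sqrt (u 0) := by
        have h3 : u 1 = Real.sqrt (u 1 ^ 2) := (Real.sqrt_sq (hu 1)).symm
        rw [h3]
        calc Real.sqrt (u 1 ^ 2) ≤ Real.sqrt (4 * C₃ ^ 2 * u 0) := Real.sqrt_le_sqrt h1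
          _ = 2 * C₃ * Real.sqrt (u 0) := by
              rw [show 4 * C₃ ^ 2 * u 0 = (2 * C₃) ^ 2 * u 0 by ring,
                Real.sqrt_mul (by positivity), Real.sqrt_sq (by positivity)]
      have : u 1 ≤ C₅ := le_trans h2 hmax
      simpa using this
    · have ihn := ih hn
      by_contra hcon
      push_neg at hcon
      have hn1 : (1:ℝ) ≤ (n:ℝ) := by exact_mod_cast hn
      have hn2 : (0:ℝ) < (n:ℝ) + 1 := by linarith
      have hcast : ((n + 1 : ℕ) : ℝ) = (n : ℝ) + 1 := by push_cast; ring
      rw [hcast, div_lt_iff₀ hn2] at hcon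
      have hN0 : (0:ℝ) ≤ (n:ℝ) := by linarith
      have hNpos : (0:ℝ) < (n:ℝ) := by linarith
      rw [le_div_iff₀ hNpos] at ihn
      -- ihn : u n * n ≤ C₅, hcon : C₅ < u (n+1) * (n+1)
      set x := u (n + 1) with hx
      set N := (n : ℝ) with hNdef
      have hx0 : 0 ≤ x := hu (n + 1)
      have t1 : x ^ 2 * N ≤ 4 * C₃ ^ 2 * (u n - x) * N :=
        mul_le_mul_of_nonneg_right (key n) hN0
      have t2 : 4 * C₃ ^ 2 * (u n * N) ≤ 4 * C₃ ^ 2 * C₅ :=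
        mul_le_mul_of_nonneg_left ihn (by positivity)
      have s0 : x ^ 2 * N + 4 * C₃ ^ 2 * (x * N) ≤ 4 * C₃ ^ 2 * C₅ := by nlinarith [t1, t2]
      have t3 : (x ^ 2 * N + 4 * C₃ ^ 2 * (x * N)) * (N + 1) ^ 2
          ≤ 4 * C₃ ^ 2 * C₅ * (N + 1) ^ 2 :=
        mul_le_mul_of_nonneg_right s0 (by positivity)
      have hq : C₅ * C₅ < (x * (N + 1)) * (x * (N + 1)) :=
        mul_self_lt_mul_self hC₅pos.le hcon
      have s1 : C₅ ^ 2 * N < x ^ 2 * N * (N + 1) ^ 2 := by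
        have := mul_lt_mul_of_pos_right hq hNpos
        nlinarith [this]
      have hp : (0:ℝ) < 4 * C₃ ^ 2 * (N * (N + 1)) := by positivity
      have s2 : 4 * C₃ ^ 2 * C₅ * (N * (N + 1)) < 4 * C₃ ^ 2 * (x * N) * (N + 1) ^ 2 := by
        have := mul_lt_mul_of_pos_left hcon hp
        nlinarith [this]
      have s3 : C₅ ^ 2 * N + 4 * C₃ ^ 2 * C₅ * (N * (N + 1))
          < 4 * C₃ ^ 2 * C₅ * (N + 1) ^ 2 := by nlinarith [t3, s1, s2]
      have w1 : 8 * C₃ ^ 2 * N ≤ C₅ * N := mul_le_mul_of_nonneg_right h8 hN0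
      have w2 : C₅ * (8 * C₃ ^ 2 * N) ≤ C₅ * (C₅ * N) :=
        mul_le_mul_of_nonneg_left w1 hC₅pos.le
      have w3 : 4 * C₃ ^ 2 * C₅ ≤ 4 * C₃ ^ 2 * C₅ * N :=
        le_mul_of_one_le_right (by positivity) hn1
      nlinarith [s3, w2, w3]
end
end

section
/- (Theorem 4(i), sufficient decrease for nonconvex separable h) Let h(x) = Σ_{j=1}^{n} h_j(x_j) with arbitrary functions h_j : ℝ → ℝ, and let f(x) = (1/2)⟨x, Ax⟩ + ⟨b, x⟩ + h(x). Let ω ∈ (0,2), θ ≥ 0, and δ = min_j ( θ/ω + ((1−ω)/ω)·D_{jj} ). Fix x ∈ ℝⁿ, set u = b + Cx, and suppose z ∈ ℝⁿ is such that for every coordinate j ∈ {1,…,n}, z_j globally minimizes the one-dimensional subproblem: for all t ∈ ℝ, (1/2)B_{jj} z_j² + w_j z_j + h_j(z_j) ≤ (1/2)B_{jj} t² + w_j t + h_j(t), where w_j = u_j + Σ_{i<j} B_{ji} z_i. Then f(z) − f(x) ≤ −(δ/2)·‖z − x‖². In particular, if δ > 0, then f(z) ≤ f(x) with strict decrease whenever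 z ≠ x. -/
open scoped RealInnerProductSpace
open Matrix Filter

noncomputable section

/-! Write `A = L + Δ + C` with `Δ` the diagonal of `B`. Because `A` is symmetric,
`½⟨z, Az⟩ − ½⟨x, Ax⟩` equals the sum over `j` of the quadratic and linear terms of the
`j`-th subproblem, evaluated at `zⱼ` minus at `xⱼ`, plus `½⟨d, (C − L)d⟩` with `d = z − x`.
Testing the `j`-th subproblem at `t = xⱼ` makes that sum (with the `hⱼ` added) nonpositive.
Since `⟨d, Lᵀd⟩ = ⟨d, Ld⟩`, the remaining form only sees the diagonal of `C − L`, namely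
`−(θ/ω + (1 − ω)/ω · Dⱼⱼ)`, and each of these entries is at least `δ`. -/

namespace Matrix

variable {ι : Type*} [Fintype ι]

def separableObjective (A : Matrix ι ι ℝ) (b : ι → ℝ) (h : ι → ℝ → ℝ) (y : ι → ℝ) : ℝ :=
  (1 / 2) * (y ⬝ᵥ A *ᵥ y) + b ⬝ᵥ y + ∑ j, h j (y j)

theorem half_dotProduct_mulVec_sub_of_eq_add {A L Δ C : Matrix ι ι ℝ} (hA : A.IsSymm)
    (hΔ : Δ.IsSymm) (hsplit : A = L + Δ + C) (x z : ι → ℝ) :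
    (1 / 2) * (z ⬝ᵥ A *ᵥ z) - (1 / 2) * (x ⬝ᵥ A *ᵥ x)
      = (1 / 2) * (z ⬝ᵥ Δ *ᵥ z - x ⬝ᵥ Δ *ᵥ x) + (C *ᵥ x + L *ᵥ z) ⬝ᵥ (z - x)
        + (1 / 2) * ((z - x) ⬝ᵥ (C - L) *ᵥ (z - x)) := by
  have symm_of {M : Matrix ι ι ℝ} (hM : M.IsSymm) : x ⬝ᵥ M *ᵥ z = z ⬝ᵥ M *ᵥ x := by
    rw [← dotProduct_transpose_mulVec, hM.eq]
  have hAxz := symm_of hA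
  subst hsplit
  simp only [add_mulVec, sub_mulVec, mulVec_sub, dotProduct_add, dotProduct_sub, add_dotProduct,
    sub_dotProduct] at hAxz ⊢
  rw [dotProduct_comm (C *ᵥ x) z, dotProduct_comm (C *ᵥ x) x, dotProduct_comm (L *ᵥ z) z,
    dotProduct_comm (L *ᵥ z) x]
  linear_combination (1 / 2 : ℝ) * hAxz - (1 / 2 : ℝ) * symm_of hΔ

theorem separableObjective_sub_le_of_forall_coord_le [DecidableEq ι] {A L C : Matrix ι ι ℝ}
    {e : ι → ℝ} (hA : A.IsSymm) (hsplit : A = L + diagonal e + C) (b : ι → ℝ)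
    (h : ι → ℝ → ℝ) {x z : ι → ℝ}
    (hz : ∀ j, (1 / 2) * e j * z j ^ 2 + (b + C *ᵥ x + L *ᵥ z) j * z j + h j (z j)
      ≤ (1 / 2) * e j * x j ^ 2 + (b + C *ᵥ x + L *ᵥ z) j * x j + h j (x j)) :
    separableObjective A b h z - separableObjective A b h x
      ≤ (1 / 2) * ((z - x) ⬝ᵥ (C - L) *ᵥ (z - x)) := by
  set w := b + C *ᵥ x + L *ᵥ z
  have hquad := half_dotProduct_mulVec_sub_of_eq_add hA (isSymm_diagonal e) hsplit x z
  calc separableObjective A b h z - separableObjective A b h x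
      = (1 / 2) * (z ⬝ᵥ diagonal e *ᵥ z - x ⬝ᵥ diagonal e *ᵥ x) + w ⬝ᵥ (z - x)
          + ∑ j, (h j (z j) - h j (x j)) + (1 / 2) * ((z - x) ⬝ᵥ (C - L) *ᵥ (z - x)) := by
        simp only [separableObjective, w, add_dotProduct, dotProduct_sub,
          Finset.sum_sub_distrib] at hquad ⊢
        linarith
    _ = ∑ j, ((1 / 2) * e j * z j ^ 2 + w j * z j + h j (z j)
          - ((1 / 2) * e j * x j ^ 2 + w j * x j + h j (x j)))
          + (1 / 2) * ((z - x) ⬝ᵥ (C - L) *ᵥ (z - x)) := by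
        congr 1
        simp only [dotProduct, mulVec_diagonal, Pi.sub_apply, ← Finset.sum_sub_distrib,
          Finset.mul_sum, ← Finset.sum_add_distrib]
        exact Finset.sum_congr rfl fun j _ => by ring
    _ ≤ (1 / 2) * ((z - x) ⬝ᵥ (C - L) *ᵥ (z - x)) :=
        add_le_of_nonpos_left (Finset.sum_nonpos fun j _ => sub_nonpos.mpr (hz j))

end Matrix

theorem ciInf_mul_sum_sq_le {ι : Type*} [Fintype ι] (c v : ι → ℝ) :
    (⨅ j, c j) * ∑ j, v j ^ 2 ≤ ∑ j, c j * v j ^ 2 := by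
  rw [Finset.mul_sum]
  exact Finset.sum_le_sum fun j _ =>
    mul_le_mul_of_nonneg_right (ciInf_le (Set.finite_range c).bddBelow j) (sq_nonneg _)

theorem real_inner_eq_dotProduct {ι : Type*} [Fintype ι] (x y : EuclideanSpace ℝ ι) :
    ⟪x, y⟫ = x.ofLp ⬝ᵥ y.ofLp := by
  rw [EuclideanSpace.inner_eq_star_dotProduct, star_trivial, dotProduct_comm]

section Splitting

variable {n : ℕ} (ω θ : ℝ) (A : Matrix (Fin n) (Fin n) ℝ)

theorem ofLp_mulVecE (x : E n) : (mulVecE A x).ofLp = A *ᵥ x.ofLp := rfl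

theorem Lmat_mulVec_apply (v : Fin n → ℝ) (j : Fin n) :
    (Lmat A *ᵥ v) j = ∑ i ∈ Finset.Iio j, A j i * v i := by
  simp only [mulVec, dotProduct, Lmat, of_apply, ite_mul, zero_mul, Fin.val_fin_lt]
  rw [← Finset.sum_filter, Finset.filter_gt_eq_Iio]

theorem Bmat_apply_of_lt {i j : Fin n} (hij : i < j) : Bmat ω θ A j i = A j i := by
  simp [Bmat, Lmat, Dmat, hij, hij.ne']

theorem Bmat_apply_self (j : Fin n) : Bmat ω θ A j j = ω⁻¹ * (A j j + θ) := by
  simp [Bmat, Lmat, Dmat, mul_add]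

theorem eq_Lmat_add_diagonal_add_Cmat (hA : A.IsSymm) (hω : ω ≠ 0) :
    A = Lmat A + diagonal (fun j => Bmat ω θ A j j) + Cmat ω θ A := by
  ext i j
  simp only [Bmat_apply_self]
  rcases lt_trichotomy i j with hij | rfl | hij
  · simp [Cmat, Lmat, Dmat, hij, hij.ne, hij.not_gt, hA.apply]
  · simp [Cmat, Lmat, Dmat]
    field_simp
    ring
  · simp [Cmat, Lmat, Dmat, hij, hij.ne', hij.not_gt]

theorem dotProduct_Cmat_sub_Lmat_mulVec (v : Fin n → ℝ) :
    v ⬝ᵥ (Cmat ω θ A - Lmat A) *ᵥ v = -∑ j, (θ / ω + (1 - ω) / ω * A j j) * v j ^ 2 := by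
  have hdiag : Cmat ω θ A - Lmat A
      = ((Lmat A)ᵀ - Lmat A) + diagonal fun j => ω⁻¹ * ((ω - 1) * A j j - θ) := by
    ext i j
    by_cases hij : i = j
    · subst hij; simp [Cmat, Dmat]
    · simp [Cmat, Dmat, hij]
  rw [hdiag, add_mulVec, dotProduct_add, sub_mulVec, dotProduct_sub, dotProduct_transpose_mulVec,
    sub_self, zero_add, ← Finset.sum_neg_distrib]
  simp only [dotProduct, mulVec_diagonal]
  exact Finset.sum_congr rfl fun j _ => by ring

end Splitting

theorem nonconvex_sufficient_decrease_general {n : ℕ}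
    (A : Matrix (Fin n) (Fin n) ℝ) (hA : A.IsSymm) (b : E n)
    (hj : Fin n → ℝ → ℝ)
    (ω θ : ℝ) (hω : ω ∈ Set.Ioo (0 : ℝ) 2)
    (δ : ℝ) (hδ : δ = ⨅ j, (θ / ω + (1 - ω) / ω * A j j))
    (f : E n → ℝ)
    (hf : ∀ y : E n, f y = (1 / 2) * ⟪y, mulVecE A y⟫ + ⟪b, y⟫ + ∑ j, hj j (y j))
    (x z : E n) (u : E n) (hu : u = b + mulVecE (Cmat ω θ A) x)
    (hzopt : ∀ j : Fin n, ∀ t : ℝ,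
      (1 / 2) * Bmat ω θ A j j * (z j) ^ 2
          + (u j + ∑ i ∈ Finset.Iio j, Bmat ω θ A j i * z i) * z j + hj j (z j)
        ≤ (1 / 2) * Bmat ω θ A j j * t ^ 2
          + (u j + ∑ i ∈ Finset.Iio j, Bmat ω θ A j i * z i) * t + hj j t) :
    f z - f x ≤ -(δ / 2) * ‖z - x‖ ^ 2
      ∧ (0 < δ → f z ≤ f x ∧ (z ≠ x → f z < f x)) := by
  have hf' (y : E n) : f y = separableObjective A b.ofLp hj y.ofLp := by
    rw [hf, real_inner_eq_dotProduct, real_inner_eq_dotProduct, ofLp_mulVecE, separableObjective]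
  have hw (j : Fin n) : u j + ∑ i ∈ Finset.Iio j, Bmat ω θ A j i * z i
      = (b.ofLp + Cmat ω θ A *ᵥ x.ofLp + Lmat A *ᵥ z.ofLp) j := by
    rw [Pi.add_apply, Lmat_mulVec_apply, hu]
    congr 1
    exact Finset.sum_congr rfl fun i hi => by rw [Bmat_apply_of_lt ω θ A (Finset.mem_Iio.mp hi)]
  have hdecr := separableObjective_sub_le_of_forall_coord_le hA
    (eq_Lmat_add_diagonal_add_Cmat ω θ A hA hω.1.ne') b.ofLp hj
    fun j => by simpa only [hw] using hzopt j (x j)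
  rw [dotProduct_Cmat_sub_Lmat_mulVec] at hdecr
  have hδnorm : δ * ‖z - x‖ ^ 2 ≤ ∑ j, (θ / ω + (1 - ω) / ω * A j j) * (z j - x j) ^ 2 := by
    simpa only [hδ, EuclideanSpace.real_norm_sq_eq, PiLp.sub_apply, Pi.sub_apply] using
      ciInf_mul_sum_sq_le (fun j => θ / ω + (1 - ω) / ω * A j j) (z.ofLp - x.ofLp)
  have hdecrease : f z - f x ≤ -(δ / 2) * ‖z - x‖ ^ 2 := by
    rw [hf', hf']
    simp only [Pi.sub_apply] at hdecr
    linarith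
  refine ⟨hdecrease, fun hδpos => ⟨?_, fun hne => ?_⟩⟩
  · nlinarith [sq_nonneg ‖z - x‖]
  · have hdist : 0 < ‖z - x‖ := norm_pos_iff.mpr (sub_ne_zero.mpr hne)
    nlinarith [mul_pos hδpos (pow_pos hdist 2)]

/-- Theorem 4(i), sufficient decrease for nonconvex separable h. -/
theorem nonconvex_sufficient_decrease {n : ℕ} (hn : 0 < n)
    (A : Matrix (Fin n) (Fin n) ℝ) (hA : A.IsSymm) (b : E n)
    (hj : Fin n → ℝ → ℝ)
    (ω θ : ℝ) (hω : ω ∈ Set.Ioo (0 : ℝ) 2) (hθ : 0 ≤ θ)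
    (δ : ℝ) (hδ : δ = ⨅ j, (θ / ω + (1 - ω) / ω * A j j))
    (f : E n → ℝ)
    (hf : ∀ y : E n, f y = (1 / 2) * ⟪y, mulVecE A y⟫ + ⟪b, y⟫ + ∑ j, hj j (y j))
    (x z : E n) (u : E n) (hu : u = b + mulVecE (Cmat ω θ A) x)
    (hzopt : ∀ j : Fin n, ∀ t : ℝ,
      (1 / 2) * Bmat ω θ A j j * (z j) ^ 2
          + (u j + ∑ i ∈ Finset.Iio j, Bmat ω θ A j i * z i) * z j + hj j (z j)
        ≤ (1 / 2) * Bmat ω θ A j j * t ^ 2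
          + (u j + ∑ i ∈ Finset.Iio j, Bmat ω θ A j i * z i) * t + hj j t) :
    f z - f x ≤ -(δ / 2) * ‖z - x‖ ^ 2
      ∧ (0 < δ → f z ≤ f x ∧ (z ≠ x → f z < f x)) :=
  nonconvex_sufficient_decrease_general A hA b hj ω θ hω δ hδ f hf x z u hu hzopt
end
end
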